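/- arXiv:cond-mat/0504304 — 3 statements merged into one kernel-verified Lean document; each statement's English description precedes it below -/
import Mathlib

section
/- Let H : ℝ → Matrix (Fin 4) (Fin 4) ℝ be continuous with H(x) symmetric for every x, and let U : ℝ → Matrix (Fin 4) (Fin 4) ℝ satisfy the matrix ODE U'(x) = J · H(x) · U(x) for all x with U(0) = I (i.e., HasDerivAt U (J * H x * U x) x for all x). Then for every x, U(x)ᵀ · J · U(x) = J (the Poincaré–Liouville theorem: the fundamental solution of a linear Hamiltonian system is symplectic). -/
/-! The Hamiltonian matrix `J * H` lies in the symplectic Lie algebra, `(J H)ᵀ J + J (J H) = 0`,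
which makes the derivative `U'ᵀ J U + Uᵀ J U'` of `Uᵀ J U` vanish along the flow `U' = J H U`;
so `Uᵀ J U` stays equal to its value `J` at `0`. -/

open Matrix

attribute [local instance] Matrix.normedAddCommGroup Matrix.normedSpace

/-- The canonical 4×4 symplectic matrix `J = fromBlocks 0 1 (-1) 0`. -/
noncomputable def Jmat : Matrix (Fin 4) (Fin 4) ℝ :=
  Matrix.reindex finSumFinEquiv finSumFinEquiv
    (Matrix.fromBlocks (0 : Matrix (Fin 2) (Fin 2) ℝ) (1 : Matrix (Fin 2) (Fin 2) ℝ)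
      (-1 : Matrix (Fin 2) (Fin 2) ℝ) (0 : Matrix (Fin 2) (Fin 2) ℝ))

lemma Jmat_transpose : Jmatᵀ = -Jmat := by
  rw [Jmat, transpose_reindex, fromBlocks_transpose, ← coe_reindexLinearEquiv ℝ,
    ← map_neg, fromBlocks_neg]
  simp

lemma Jmat_mul_self : Jmat * Jmat = -1 := by
  have hblocks : (fromBlocks 0 1 (-1) 0 * fromBlocks 0 1 (-1) 0 :
      Matrix (Fin 2 ⊕ Fin 2) (Fin 2 ⊕ Fin 2) ℝ) = -1 := by
    rw [fromBlocks_multiply, ← fromBlocks_one, fromBlocks_neg]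
    simp
  rw [Jmat, ← coe_reindexAlgEquiv ℝ, ← map_mul, hblocks, map_neg, map_one]

section

variable {m n p : Type*} [Fintype m] [Fintype n] [Fintype p]

theorem HasDerivAt.transpose_mul_mul {A : ℝ → Matrix m n ℝ} {C : ℝ → Matrix m p ℝ}
    {A' : Matrix m n ℝ} {C' : Matrix m p ℝ} {x : ℝ} (J : Matrix m m ℝ)
    (hA : HasDerivAt A A' x) (hC : HasDerivAt C C' x) :
    HasDerivAt (fun t ↦ (A t)ᵀ * J * C t) (A'ᵀ * J * C x + (A x)ᵀ * J * C') x := by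
  let B : Matrix m n ℝ →ₗ[ℝ] Matrix m p ℝ →ₗ[ℝ] Matrix n p ℝ :=
    LinearMap.mk₂ ℝ (fun A C ↦ Aᵀ * J * C) (by simp [Matrix.add_mul]) (by simp)
      (by simp [Matrix.mul_add]) (by simp)
  exact (B.toContinuousBilinearMap.hasDerivAt_of_bilinear (fun _ ↦ hA) (fun _ ↦ hC)).congr_deriv
    (add_comm _ _)

end

section

variable {n : Type*} [Fintype n] [DecidableEq n] {J : Matrix n n ℝ}

theorem transpose_mul_add_mul_eq_zero_of_isSymm (hJt : Jᵀ = -J) (hJJ : J * J = -1)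
    {H : Matrix n n ℝ} (hH : H.IsSymm) : (J * H)ᵀ * J + J * (J * H) = 0 := by
  rw [transpose_mul, hH.eq, hJt, Matrix.mul_assoc, Matrix.neg_mul, hJJ, ← Matrix.mul_assoc, hJJ]
  simp

theorem transpose_mul_mul_eq_of_hasDerivAt_hamiltonian (hJt : Jᵀ = -J) (hJJ : J * J = -1)
    {H U : ℝ → Matrix n n ℝ} (hH : ∀ x, (H x).IsSymm)
    (hU : ∀ x, HasDerivAt U (J * H x * U x) x) (x y : ℝ) :
    (U x)ᵀ * J * U x = (U y)ᵀ * J * U y := by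
  have hderiv : ∀ t, HasDerivAt (fun t ↦ (U t)ᵀ * J * U t) 0 t := fun t ↦ by
    convert (hU t).transpose_mul_mul J (hU t) using 1
    calc (0 : Matrix n n ℝ)
        = (U t)ᵀ * ((J * H t)ᵀ * J + J * (J * H t)) * U t := by
          rw [transpose_mul_add_mul_eq_zero_of_isSymm hJt hJJ (hH t), Matrix.mul_zero,
            Matrix.zero_mul]
      _ = (J * H t * U t)ᵀ * J * U t + (U t)ᵀ * J * (J * H t * U t) := by
          simp only [transpose_mul, Matrix.mul_add, Matrix.add_mul, Matrix.mul_assoc]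
  exact is_const_of_deriv_eq_zero (fun t ↦ (hderiv t).differentiableAt)
    (fun t ↦ (hderiv t).deriv) x y

end

theorem poincare_liouville_general
    (H U : ℝ → Matrix (Fin 4) (Fin 4) ℝ)
    (hHsym : ∀ x, (H x)ᵀ = H x)
    (hU : ∀ x, HasDerivAt U (Jmat * H x * U x) x)
    (hU0 : U 0 = 1) :
    ∀ x, (U x)ᵀ * Jmat * U x = Jmat := by
  intro x
  rw [transpose_mul_mul_eq_of_hasDerivAt_hamiltonian Jmat_transpose Jmat_mul_self hHsym hU x 0,
    hU0]
  simp

/-- **Poincaré–Liouville theorem**: the fundamental solution of a linear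
Hamiltonian system is symplectic. -/
theorem poincare_liouville
    (H U : ℝ → Matrix (Fin 4) (Fin 4) ℝ)
    (hHcont : Continuous H)
    (hHsym : ∀ x, (H x)ᵀ = H x)
    (hU : ∀ x, HasDerivAt U (Jmat * H x * U x) x)
    (hU0 : U 0 = 1) :
    ∀ x, (U x)ᵀ * Jmat * U x = Jmat :=
  poincare_liouville_general H U hHsym hU hU0
end

section
/- Let M be a 4×4 real matrix with Mᵀ · J · M = J. Then the characteristic polynomial of M is palindromic and given explicitly by det(M − λI) = 1 + aλ + bλ² + aλ³ + λ⁴, where a = −Tr(M) and b = ½((Tr M)² − Tr(M²)). Equivalently, the characteristic polynomial of M equals X⁴ − (Tr M)·X³ + ½((Tr M)² − Tr(M²))·X² − (Tr M)·X + 1. -/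
open Matrix Polynomial

/-!
Since `M⁻¹ = J⁻¹ Mᵀ J`, the matrices `M` and `M⁻¹` have the same characteristic polynomial; as
`det M = 1` and the dimension is even, this says that `charpoly M` is its own reverse. So
`charpoly M = X⁴ - t X³ + c X² - t X + 1` with `t = Tr M`. Cayley–Hamilton, divided by `M²`, gives
`M² + M⁻² = t (M + M⁻¹) - c`, and taking traces (`Tr M⁻ᵏ = Tr Mᵏ`, again by the conjugation) yields
`2 Tr M² = 2 t² - 4 c`.
-/

theorem Units.sq_add_inv_sq_eq {R A : Type*} [CommRing R] [Ring A] [Algebra R A] (u : Aˣ)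
    {t c : R} (h : (u : A) ^ 4 - t • (u : A) ^ 3 + c • (u : A) ^ 2 - t • (u : A) + 1 = 0) :
    (u : A) ^ 2 + (↑u⁻¹ : A) ^ 2 = t • ((u : A) + ↑u⁻¹) - c • 1 := by
  have h2 : (↑u⁻¹ : A) ^ 2 * (u : A) ^ 2 = 1 := by
    rw [← Units.val_pow_eq_pow_val, ← Units.val_pow_eq_pow_val, ← Units.val_mul, inv_pow,
      inv_mul_cancel, Units.val_one]
  have hpow (k : ℕ) : (↑u⁻¹ : A) ^ 2 * (u : A) ^ (2 + k) = (u : A) ^ k := by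
    rw [pow_add, ← mul_assoc, h2, one_mul]
  have h1 : (↑u⁻¹ : A) ^ 2 * u = ↑u⁻¹ := by
    rw [sq, mul_assoc, Units.inv_mul, mul_one]
  have key : (↑u⁻¹ : A) ^ 2 * ((u : A) ^ 4 - t • (u : A) ^ 3 + c • (u : A) ^ 2 - t • (u : A) + 1)
      = (u : A) ^ 2 + (↑u⁻¹ : A) ^ 2 - (t • ((u : A) + ↑u⁻¹) - c • 1) := by
    simp only [mul_add, mul_sub, mul_smul_comm, mul_one, hpow 2, hpow 1, h2, h1, pow_one, smul_add]
    abel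
  rw [h, mul_zero] at key
  exact sub_eq_zero.1 key.symm

namespace Matrix

theorem trace_reindex {m n R : Type*} [Fintype m] [Fintype n] [AddCommMonoid R] (e : m ≃ n)
    (A : Matrix m m R) : (reindex e e A).trace = A.trace := by
  simp only [trace, diag, reindex_apply, submatrix_apply]
  exact e.symm.sum_comp fun i => A i i

variable {n R : Type*} [DecidableEq n] [Fintype n] [CommRing R]

theorem det_sub_smul_one (M : Matrix n n R) (r : R) :
    (M - r • (1 : Matrix n n R)).det = (-1) ^ Fintype.card n * M.charpoly.eval r := by
  rw [eval_charpoly, ← det_neg, neg_sub, smul_one_eq_diagonal, scalar_apply]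

theorem charpoly_of_card_eq_four_of_reverse_eq {M : Matrix n n R} (hn : Fintype.card n = 4)
    (hM : M.charpoly.reverse = M.charpoly) :
    M.charpoly =
      X ^ 4 - C M.trace * X ^ 3 + C (M.charpoly.coeff 2) * X ^ 2 - C M.trace * X + 1 := by
  nontriviality R
  have : Nonempty n := Fintype.card_pos_iff.1 (by omega)
  have hdeg : M.charpoly.natDegree = 4 := hn ▸ charpoly_natDegree_eq_dim M
  have hsymm (k : ℕ) (hk : k ≤ 4) : M.charpoly.coeff k = M.charpoly.coeff (4 - k) := by
    rw [← hM, coeff_reverse, hdeg, revAt_le hk, hM]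
  have h4 : M.charpoly.coeff 4 = 1 := hdeg ▸ (charpoly_monic M).leadingCoeff
  have h3 : M.charpoly.coeff 3 = -M.trace := by
    rw [trace_eq_neg_charpoly_coeff, hn, neg_neg]
  have h1 : M.charpoly.coeff 1 = -M.trace := (hsymm 1 (by norm_num)).trans h3
  have h0 : M.charpoly.coeff 0 = 1 := (hsymm 0 (by norm_num)).trans h4
  conv_lhs => rw [as_sum_range_C_mul_X_pow M.charpoly, hdeg]
  simp only [Finset.sum_range_succ, Finset.range_zero, Finset.sum_empty, h0, h1, h3, h4, C_neg,
    C_1]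
  ring

end Matrix

namespace SymplecticGroup

variable {l R : Type*} [DecidableEq l] [Fintype l] [CommRing R] {A : Matrix (l ⊕ l) (l ⊕ l) R}

theorem charpoly_inv (hA : A ∈ symplecticGroup l R) : A⁻¹.charpoly = A.charpoly := by
  rw [inv_eq_symplectic_inv A hA, charpoly_mul_comm, ← Matrix.mul_assoc, Matrix.mul_neg,
    J_squared, neg_neg, Matrix.one_mul, charpoly_transpose]

theorem trace_inv (hA : A ∈ symplecticGroup l R) : A⁻¹.trace = A.trace := by
  rw [trace_eq_neg_charpoly_nextCoeff, trace_eq_neg_charpoly_nextCoeff, charpoly_inv hA]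

theorem reverse_charpoly_eq (hA : A ∈ symplecticGroup l R) :
    A.charpoly.reverse = A.charpoly := by
  have hcard : Even (Fintype.card (l ⊕ l)) := by simp [Fintype.card_sum]
  rw [Matrix.reverse_charpoly, ← charpoly_inv hA,
    Matrix.charpoly_inv A ((isUnit_iff_isUnit_det A).2 (symplectic_det hA)), det_eq_one hA,
    hcard.neg_one_pow]
  simp

theorem charpoly_of_card_eq_two {K : Type*} [Field K] [NeZero (2 : K)]
    {A : Matrix (l ⊕ l) (l ⊕ l) K} (hl : Fintype.card l = 2) (hA : A ∈ symplecticGroup l K) :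
    A.charpoly = X ^ 4 - C A.trace * X ^ 3 + C ((A.trace ^ 2 - (A * A).trace) / 2) * X ^ 2
      - C A.trace * X + 1 := by
  have hcard : Fintype.card (l ⊕ l) = 4 := by simp [Fintype.card_sum, hl]
  have hp := charpoly_of_card_eq_four_of_reverse_eq hcard (reverse_charpoly_eq hA)
  set c := A.charpoly.coeff 2
  suffices hc : c = (A.trace ^ 2 - (A * A).trace) / 2 by rwa [hc] at hp
  have hCH : A ^ 4 - A.trace • A ^ 3 + c • A ^ 2 - A.trace • A + 1 = 0 := by
    have := aeval_self_charpoly A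
    rw [hp] at this
    simpa only [map_add, map_sub, map_mul, map_pow, aeval_X, aeval_C, map_one,
      ← Algebra.smul_def] using this
  have hsq : A ^ 2 + A⁻¹ ^ 2 = A.trace • (A + A⁻¹) - c • 1 :=
    Units.sq_add_inv_sq_eq (nonsingInvUnit A (symplectic_det hA)) hCH
  have htr := congrArg trace hsq
  rw [trace_add, trace_sub, trace_smul, trace_smul, trace_add, trace_one, hcard, inv_pow',
    trace_inv hA, trace_inv (pow_mem hA 2), smul_eq_mul, smul_eq_mul] at htr
  have htr_sq : (A ^ 2).trace = A.trace ^ 2 - 2 * c :=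
    mul_left_cancel₀ two_ne_zero (by push_cast at htr; linear_combination htr)
  rw [← sq, eq_div_iff two_ne_zero]
  linear_combination htr_sq

end SymplecticGroup

theorem Jmat_eq_reindex_neg_J : Jmat = reindex finSumFinEquiv finSumFinEquiv (-J (Fin 2) ℝ) := by
  rw [Jmat, J, fromBlocks_neg, neg_zero, neg_neg]

theorem mem_symplecticGroup_of_reindex {N : Matrix (Fin 2 ⊕ Fin 2) (Fin 2 ⊕ Fin 2) ℝ}
    (hN : (reindex finSumFinEquiv finSumFinEquiv N)ᵀ * Jmat
      * reindex finSumFinEquiv finSumFinEquiv N = Jmat) : N ∈ symplecticGroup (Fin 2) ℝ := by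
  have h : Nᵀ * (-J (Fin 2) ℝ) * N = -J (Fin 2) ℝ := by
    apply (reindexAlgEquiv ℝ ℝ finSumFinEquiv).injective
    simpa only [map_mul, coe_reindexAlgEquiv, transpose_reindex, ← Jmat_eq_reindex_neg_J] using hN
  rw [SymplecticGroup.mem_iff', ← neg_inj]
  simpa only [Matrix.mul_neg, Matrix.neg_mul] using h

/-- The characteristic polynomial of a 4×4 symplectic matrix is palindromic:
`det(M − λI) = 1 + aλ + bλ² + aλ³ + λ⁴` with `a = −Tr M` and
`b = ((Tr M)² − Tr(M²))/2`; equivalently its characteristic polynomial is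
`X⁴ − (Tr M)X³ + ((Tr M)² − Tr M²)/2 · X² − (Tr M)X + 1`. -/
theorem symplectic_charpoly_palindromic
    (M : Matrix (Fin 4) (Fin 4) ℝ) (hM : Mᵀ * Jmat * M = Jmat) :
    (∀ lam : ℝ, (M - lam • (1 : Matrix (Fin 4) (Fin 4) ℝ)).det =
        1 + (-M.trace) * lam + ((M.trace ^ 2 - (M * M).trace) / 2) * lam ^ 2
          + (-M.trace) * lam ^ 3 + lam ^ 4) ∧
      M.charpoly = X ^ 4 - C M.trace * X ^ 3
          + C ((M.trace ^ 2 - (M * M).trace) / 2) * X ^ 2 - C M.trace * X + 1 := by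
  obtain ⟨N, rfl⟩ :=
    (reindex (finSumFinEquiv (m := 2) (n := 2)) (finSumFinEquiv (m := 2) (n := 2))).surjective M
  have hmul : reindex finSumFinEquiv finSumFinEquiv N * reindex finSumFinEquiv finSumFinEquiv N
      = reindex finSumFinEquiv finSumFinEquiv (N * N) := by
    simp only [← coe_reindexAlgEquiv ℝ ℝ, map_mul]
  rw [hmul, trace_reindex, trace_reindex, charpoly_reindex]
  have hpoly := SymplecticGroup.charpoly_of_card_eq_two (Fintype.card_fin 2)
    (mem_symplecticGroup_of_reindex hM)
  refine ⟨fun lam => ?_, hpoly⟩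
  rw [det_sub_smul_one, charpoly_reindex, hpoly]
  simp only [eval_add, eval_sub, eval_mul, eval_pow, eval_C, eval_X, eval_one, Fintype.card_fin]
  ring
end

section
/- Let n ∈ ℕ, let A : ℝ → ℝ → Matrix (Fin n) (Fin n) ℝ be such that for each parameter μ the map x ↦ A(x, μ) is continuous, and let V be an orthogonal n×n real matrix such that A(x, −μ) = V · A(x, μ) · Vᵀ for all x, μ. For each μ let U(·, μ) solve U'(x, μ) = A(x, μ) · U(x, μ) with U(0, μ) = I. Then U(x, −μ) = V · U(x, μ) · Vᵀ for all x, μ; in particular the traces of the period maps satisfy Tr U(1, −μ) = Tr U(1, μ) and Tr (U(1, −μ))² = Tr (U(1, μ))², i.e., they are even functions of the parameter μ. -/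
open Matrix

attribute [local instance] Matrix.normedAddCommGroup Matrix.normedSpace

/-!
Both `x ↦ U(x, -μ)` and `x ↦ V U(x, μ) Vᵀ` solve the linear system with coefficient matrix
`A(x, -μ) = V A(x, μ) Vᵀ` and start at the identity, so they coincide by uniqueness of solutions
of linear ODEs with continuous coefficients. The trace identities follow because conjugation by
an orthogonal matrix is multiplicative and preserves traces.
-/

open Set

theorem conj_mul_conj_of_mul_eq_one {M : Type*} [Monoid M] {v w : M} (hwv : w * v = 1)
    (a b : M) : v * a * w * (v * b * w) = v * (a * b) * w := by
  simp only [mul_assoc, ← mul_assoc w, hwv, one_mul]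

theorem Matrix.trace_conj_of_mul_eq_one {ι R : Type*} [Fintype ι] [DecidableEq ι] [CommSemiring R]
    {V W : Matrix ι ι R} (hWV : W * V = 1) (M : Matrix ι ι R) :
    trace (V * M * W) = trace M := by
  rw [trace_mul_cycle, hWV, one_mul]

theorem linearODE_solution_unique {E : Type*} [NormedAddCommGroup E] [NormedSpace ℝ E]
    {A : ℝ → E →L[ℝ] E} (hA : Continuous A) {f g : ℝ → E} {t₀ : ℝ}
    (hf : ∀ t, HasDerivAt f (A t (f t)) t) (hg : ∀ t, HasDerivAt g (A t (g t)) t)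
    (heq : f t₀ = g t₀) : f = g := by
  funext t
  obtain ⟨a, b, hta, ht₀⟩ : ∃ a b, t ∈ Ioo a b ∧ t₀ ∈ Ioo a b :=
    ⟨min t t₀ - 1, max t t₀ + 1, by grind, by grind⟩
  obtain ⟨C, hC⟩ := (isCompact_Icc (a := a) (b := b)).exists_bound_of_continuousOn hA.continuousOn
  have hlip : ∀ s ∈ Ioo a b, LipschitzOnWith C.toNNReal (A s) univ := fun s hs =>
    have hAs : ‖A s‖ ≤ C := hC s (Ioo_subset_Icc_self hs)
    ((A s).lipschitz.weaken
      ((Real.le_toNNReal_iff_coe_le ((norm_nonneg _).trans hAs)).2 hAs)).lipschitzOnWith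
  exact ODE_solution_unique_of_mem_Ioo hlip ht₀ (fun s _ => ⟨hf s, mem_univ _⟩)
    (fun s _ => ⟨hg s, mem_univ _⟩) heq hta

section MatrixODE

variable {ι : Type*} [Fintype ι] [DecidableEq ι]

theorem matrixODE_solution_unique {A : ℝ → Matrix ι ι ℝ} (hA : Continuous A)
    {Y Z : ℝ → Matrix ι ι ℝ} {t₀ : ℝ} (hY : ∀ t, HasDerivAt Y (A t * Y t) t)
    (hZ : ∀ t, HasDerivAt Z (A t * Z t) t) (heq : Y t₀ = Z t₀) : Y = Z := by
  let mulLeft : Matrix ι ι ℝ →ₗ[ℝ] Matrix ι ι ℝ →L[ℝ] Matrix ι ι ℝ :=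
    LinearMap.toContinuousLinearMap.toLinearMap ∘ₗ LinearMap.mul ℝ _
  exact linearODE_solution_unique (A := fun t => mulLeft (A t))
    (mulLeft.continuous_of_finiteDimensional.comp hA) hY hZ heq

theorem hasDerivAt_conj_of_mul_eq_one {V W : Matrix ι ι ℝ} (hWV : W * V = 1) {Y : ℝ → Matrix ι ι ℝ}
    {A : Matrix ι ι ℝ} {x : ℝ} (hY : HasDerivAt Y (A * Y x) x) :
    HasDerivAt (fun y => V * Y y * W) (V * A * W * (V * Y x * W)) x := by
  let conj : Matrix ι ι ℝ →L[ℝ] Matrix ι ι ℝ :=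
    LinearMap.toContinuousLinearMap (LinearMap.mulLeft ℝ V ∘ₗ LinearMap.mulRight ℝ W)
  have hconj : ∀ M, conj M = V * M * W := fun M => by simp [conj, mul_assoc]
  have h := conj.hasFDerivAt.comp_hasDerivAt x hY
  simp only [Function.comp_def, hconj] at h
  rwa [conj_mul_conj_of_mul_eq_one hWV, ← hconj]

end MatrixODE

/-- If the coefficient matrix of a linear periodic system satisfies the symmetry
`A(x, −μ) = V A(x, μ) Vᵀ` for an orthogonal matrix `V`, then the fundamental
solution satisfies `U(x, −μ) = V U(x, μ) Vᵀ`; in particular the traces of the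
period map and of its square are even functions of the parameter `μ`. -/
theorem monodromy_even_in_parameter
    (n : ℕ) (A : ℝ → ℝ → Matrix (Fin n) (Fin n) ℝ)
    (hAcont : ∀ μ : ℝ, Continuous fun x => A x μ)
    (V : Matrix (Fin n) (Fin n) ℝ) (hV : Vᵀ * V = 1)
    (hsym : ∀ x μ : ℝ, A x (-μ) = V * A x μ * Vᵀ)
    (U : ℝ → ℝ → Matrix (Fin n) (Fin n) ℝ)
    (hU : ∀ μ x : ℝ, HasDerivAt (fun y => U y μ) (A x μ * U x μ) x)
    (hU0 : ∀ μ : ℝ, U 0 μ = 1) :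
    (∀ x μ : ℝ, U x (-μ) = V * U x μ * Vᵀ) ∧
      (∀ μ : ℝ, (U 1 (-μ)).trace = (U 1 μ).trace) ∧
      (∀ μ : ℝ, (U 1 (-μ) * U 1 (-μ)).trace = (U 1 μ * U 1 μ).trace) := by
  have hconj : ∀ x μ : ℝ, U x (-μ) = V * U x μ * Vᵀ := by
    intro x μ
    have hsol : ∀ y, HasDerivAt (fun y => V * U y μ * Vᵀ) (A y (-μ) * (V * U y μ * Vᵀ)) y :=
      fun y => hsym y μ ▸ hasDerivAt_conj_of_mul_eq_one hV (hU μ y)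
    have hinit : U 0 (-μ) = V * U 0 μ * Vᵀ := by
      rw [hU0, hU0, mul_one, mul_eq_one_comm.mp hV]
    exact congrFun (matrixODE_solution_unique (hAcont (-μ)) (hU (-μ)) hsol hinit) x
  refine ⟨hconj, fun μ => ?_, fun μ => ?_⟩
  · rw [hconj, trace_conj_of_mul_eq_one hV]
  · rw [hconj, conj_mul_conj_of_mul_eq_one hV, trace_conj_of_mul_eq_one hV]
end
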